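/- arXiv:2012.10113 — 2 statements merged into one kernel-verified Lean document; each statement's English description precedes it below -/
import Mathlib

section
/- Let K : ℝ → ℝ be a symmetric probability density which is nonincreasing on [0, ∞). Then for all h > 0 and all z₁, z₂ ∈ ℝ, ∫_ℝ |K((y − z₁)/h) − K((y − z₂)/h)| dy ≤ 2 · K(0) · |z₁ − z₂|. -/
open MeasureTheory Set

/-!
Centring at the midpoint of `z₁, z₂` and rescaling by `h` reduces the claim to
`∫ |K (u - s) - K (u + s)| ≤ 4 K(0) |s|`. For `s ≥ 0` the integrand is even in `u`, and for
`u > 0` symmetry and monotonicity give `K (u + s) ≤ K (u - s)`, so the integral equals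
`2 ∫_{u>0} (K (u - s) - K (u + s)) = 2 ∫_{-s}^{s} K ≤ 4 s K(0)`.
-/

theorem setIntegral_Ioi_comp_add_right {E : Type*} [NormedAddCommGroup E] [NormedSpace ℝ E]
    (f : ℝ → E) (a d : ℝ) : ∫ x in Ioi a, f (x + d) = ∫ x in Ioi (a + d), f x := by
  simpa using (measurePreserving_add_right volume d).setIntegral_preimage_emb
    (measurableEmbedding_addRight d) f (Ioi (a + d))

theorem intervalIntegral_le_const_mul_sub {f : ℝ → ℝ} {a b C : ℝ} (hab : a ≤ b)
    (hf : IntervalIntegrable f volume a b) (hC : ∀ x ∈ Icc a b, f x ≤ C) :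
    ∫ x in a..b, f x ≤ C * (b - a) := by
  calc ∫ x in a..b, f x ≤ ∫ _ in a..b, C := intervalIntegral.integral_mono_on hab hf (by simp) hC
    _ = C * (b - a) := by rw [intervalIntegral.integral_const, smul_eq_mul, mul_comm]

theorem integral_comp_sub_div {E : Type*} [NormedAddCommGroup E] [NormedSpace ℝ E]
    (g : ℝ → E) (c a : ℝ) : ∫ y, g ((y - c) / a) = |a| • ∫ y, g y := by
  rw [integral_sub_right_eq_self (fun y ↦ g (y / a)) c, Measure.integral_comp_div]

namespace Function.Even

variable {K : ℝ → ℝ}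

theorem apply_abs {β : Type*} {f : ℝ → β} (hf : Function.Even f) (x : ℝ) : f |x| = f x := by
  rcases abs_choice x with h | h <;> rw [h]
  exact hf x

theorem apply_le_apply_of_abs_le_abs (hK : Function.Even K) (hmono : AntitoneOn K (Ici 0))
    {a b : ℝ} (hab : |a| ≤ |b|) : K b ≤ K a := by
  rw [← hK.apply_abs a, ← hK.apply_abs b]
  exact hmono (abs_nonneg a) ((abs_nonneg a).trans hab) hab

theorem apply_add_le_apply_sub (hK : Function.Even K) (hmono : AntitoneOn K (Ici 0))
    {u s : ℝ} (hu : 0 ≤ u) (hs : 0 ≤ s) : K (u + s) ≤ K (u - s) :=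
  hK.apply_le_apply_of_abs_le_abs hmono <| by
    rw [abs_of_nonneg (add_nonneg hu hs), abs_sub_le_iff]; constructor <;> linarith

theorem integral_abs_sub_comp_sub_comp_add_le_of_nonneg (hK : Function.Even K)
    (hmono : AntitoneOn K (Ici 0)) (hint : Integrable K) {s : ℝ} (hs : 0 ≤ s) :
    ∫ u, |K (u - s) - K (u + s)| ≤ 4 * K 0 * s := by
  have hK0 : ∀ x, K x ≤ K 0 := fun x ↦ hK.apply_le_apply_of_abs_le_abs hmono (by simp)
  have heven : Function.Even fun u ↦ |K (u - s) - K (u + s)| := fun u ↦ by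
    simp only [← hK (-u - s), ← hK (-u + s)]
    rw [abs_sub_comm]; ring_nf
  calc ∫ u, |K (u - s) - K (u + s)|
      = 2 * ∫ u in Ioi 0, |K (u - s) - K (u + s)| := by
        rw [← integral_comp_abs]
        exact integral_congr_ae (.of_forall fun u ↦ (heven.apply_abs u).symm)
    _ = 2 * ∫ u in Ioi 0, (K (u - s) - K (u + s)) := by
        congr 1
        refine setIntegral_congr_fun measurableSet_Ioi fun u hu ↦ abs_of_nonneg ?_
        exact sub_nonneg.2 (hK.apply_add_le_apply_sub hmono (le_of_lt hu) hs)
    _ = 2 * ∫ u in -s..s, K u := by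
        rw [integral_sub (hint.comp_sub_right s).integrableOn (hint.comp_add_right s).integrableOn,
          ← intervalIntegral.integral_Ioi_sub_Ioi hint.integrableOn (by linarith)]
        simp only [sub_eq_add_neg, setIntegral_Ioi_comp_add_right, zero_add]
    _ ≤ 2 * (K 0 * (s - -s)) := by
        gcongr
        exact intervalIntegral_le_const_mul_sub (by linarith) hint.intervalIntegrable
          fun x _ ↦ hK0 x
    _ = 4 * K 0 * s := by ring

theorem integral_abs_sub_comp_sub_comp_add_le (hK : Function.Even K)
    (hmono : AntitoneOn K (Ici 0)) (hint : Integrable K) (s : ℝ) :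
    ∫ u, |K (u - s) - K (u + s)| ≤ 4 * K 0 * |s| := by
  rcases le_total 0 s with hs | hs
  · rw [abs_of_nonneg hs]
    exact hK.integral_abs_sub_comp_sub_comp_add_le_of_nonneg hmono hint hs
  · have := hK.integral_abs_sub_comp_sub_comp_add_le_of_nonneg hmono hint (neg_nonneg.2 hs)
    simp only [sub_neg_eq_add, ← sub_eq_add_neg, abs_sub_comm (K (_ + s))] at this
    rwa [abs_of_nonpos hs]

end Function.Even

theorem kernel_shift_l1_bound_general (K : ℝ → ℝ)
    (hKint : Integrable K)
    (hKsymm : ∀ u, K (-u) = K u) (hKmono : AntitoneOn K (Set.Ici 0)) :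
    ∀ h : ℝ, 0 < h → ∀ z₁ z₂ : ℝ,
      ∫ y, |K ((y - z₁) / h) - K ((y - z₂) / h)| ≤ 2 * K 0 * |z₁ - z₂| := by
  intro h hh z₁ z₂
  set c := (z₁ + z₂) / 2
  set s := (z₁ - z₂) / (2 * h)
  have hcentre : ∀ y, |K ((y - z₁) / h) - K ((y - z₂) / h)|
      = |K ((y - c) / h - s) - K ((y - c) / h + s)| := fun y ↦ by
    congr 3 <;> simp only [c, s] <;> field_simp <;> ring
  calc ∫ y, |K ((y - z₁) / h) - K ((y - z₂) / h)|
      = h * ∫ u, |K (u - s) - K (u + s)| := by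
        simp only [hcentre, integral_comp_sub_div (fun u ↦ |K (u - s) - K (u + s)|),
          abs_of_pos hh, smul_eq_mul]
    _ ≤ h * (4 * K 0 * |s|) :=
        mul_le_mul_of_nonneg_left
          (Function.Even.integral_abs_sub_comp_sub_comp_add_le hKsymm hKmono hKint s) hh.le
    _ = 2 * K 0 * |z₁ - z₂| := by
        rw [abs_div, abs_of_pos (by positivity : 0 < 2 * h)]
        field_simp
        ring

theorem kernel_shift_l1_bound (K : ℝ → ℝ) (hKmeas : Measurable K)
    (hKnonneg : ∀ u, 0 ≤ K u) (hKint : Integrable K) (hKone : ∫ u, K u = 1)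
    (hKsymm : ∀ u, K (-u) = K u) (hKmono : AntitoneOn K (Set.Ici 0)) :
    ∀ h : ℝ, 0 < h → ∀ z₁ z₂ : ℝ,
      ∫ y, |K ((y - z₁) / h) - K ((y - z₂) / h)| ≤ 2 * K 0 * |z₁ - z₂| :=
  kernel_shift_l1_bound_general K hKint hKsymm hKmono
end

section
/- Let K : ℝ → ℝ be a probability density with ∫ K(u)·|u|^r du < ∞, let g : ℝ → ℝ be a density that is (r, C)-Hölder continuous for some r ∈ (0,1] and C > 0, let h > 0, and let S ⊆ ℝ be a Borel set of finite Lebesgue measure λ(S). Then ∫_S |∫_ℝ (1/h)·K((y − x)/h)·g(x) dx − g(y)| dy ≤ C · λ(S) · h^r · ∫_ℝ K(u)·|u|^r du. -/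
/-!
Substituting `x = y - h u` turns the smoothed density at `y` into `∫ K u · g (y - h u) du`.
Since `∫ K = 1`, its deviation from `g y` is `∫ K u · (g (y - h u) - g y) du`, and the Hölder
condition bounds the integrand by `C h^r · K u |u|^r`. The resulting pointwise bound
`C h^r ∫ K |u|^r` is uniform in `y`, so integrating it over `S` costs a factor `λ(S)`.
-/

open MeasureTheory

theorem integral_rescaled_kernel_mul_eq (K g : ℝ → ℝ) {h : ℝ} (hh : 0 < h) (y : ℝ) :
    ∫ x, (1 / h) * K ((y - x) / h) * g x = ∫ u, K u * g (y - h * u) := by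
  set F : ℝ → ℝ := fun u => K u * g (y - h * u)
  have hF : ∀ x, (1 / h) * K ((y - x) / h) * g x = (1 / h) * F ((y - x) / h) := fun x => by
    simp only [F, mul_div_cancel₀ _ hh.ne', sub_sub_cancel, mul_assoc]
  simp_rw [hF, integral_const_mul, integral_sub_left_eq_self (fun x => F (x / h)),
    Measure.integral_comp_div, abs_of_pos hh, smul_eq_mul, one_div, inv_mul_cancel_left₀ hh.ne']

theorem abs_integral_kernel_mul_shift_sub_le {K g : ℝ → ℝ} {r C h : ℝ}
    (hKnonneg : ∀ u, 0 ≤ K u) (hKint : Integrable K) (hKone : ∫ u, K u = 1)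
    (hKr : Integrable (fun u => K u * |u| ^ r)) (hg_meas : Measurable g)
    (hHolder : ∀ x y : ℝ, |g x - g y| ≤ C * |x - y| ^ r) (hh : 0 ≤ h) (y : ℝ) :
    |(∫ u, K u * g (y - h * u)) - g y| ≤ C * h ^ r * ∫ u, K u * |u| ^ r := by
  have hbound : ∀ u, ‖K u * (g (y - h * u) - g y)‖ ≤ C * h ^ r * (K u * |u| ^ r) := fun u => by
    have hshift : |g (y - h * u) - g y| ≤ C * (h ^ r * |u| ^ r) := by
      have := hHolder (y - h * u) y
      rwa [sub_sub_cancel_left, abs_neg, abs_mul, abs_of_nonneg hh,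
        Real.mul_rpow hh (abs_nonneg u)] at this
    calc ‖K u * (g (y - h * u) - g y)‖ = K u * |g (y - h * u) - g y| := by
          rw [Real.norm_eq_abs, abs_mul, abs_of_nonneg (hKnonneg u)]
      _ ≤ K u * (C * (h ^ r * |u| ^ r)) := mul_le_mul_of_nonneg_left hshift (hKnonneg u)
      _ = C * h ^ r * (K u * |u| ^ r) := by ring
  have hdom : Integrable (fun u => C * h ^ r * (K u * |u| ^ r)) := hKr.const_mul _
  have hdiff : Integrable (fun u => K u * (g (y - h * u) - g y)) :=
    hdom.mono' (hKint.aestronglyMeasurable.mul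
      ((hg_meas.comp (by fun_prop)).sub measurable_const).aestronglyMeasurable)
      (Filter.Eventually.of_forall hbound)
  have hsplit : (∫ u, K u * g (y - h * u)) - g y = ∫ u, K u * (g (y - h * u) - g y) := by
    have hprod : Integrable (fun u => K u * g (y - h * u)) :=
      (hdiff.add (hKint.mul_const (g y))).congr (Filter.Eventually.of_forall fun u => by
        simp only [Pi.add_apply]; ring)
    simp_rw [mul_sub, integral_sub hprod (hKint.mul_const (g y)), integral_mul_const, hKone,
      one_mul]
  rw [hsplit, ← Real.norm_eq_abs, ← integral_const_mul]
  exact norm_integral_le_of_norm_le hdom (Filter.Eventually.of_forall hbound)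

theorem kde_bias_bound_general (K g : ℝ → ℝ) (r C : ℝ) (hKnonneg : ∀ u, 0 ≤ K u)
    (hKint : Integrable K) (hKone : ∫ u, K u = 1)
    (hKr : Integrable (fun u => K u * |u| ^ r))
    (hg_meas : Measurable g)
    (hHolder : ∀ x y : ℝ, |g x - g y| ≤ C * |x - y| ^ r)
    (h : ℝ) (hh : 0 < h) (S : Set ℝ)
    (hSfin : volume S ≠ ⊤) :
    ∫ y in S, |(∫ x, (1 / h) * K ((y - x) / h) * g x) - g y| ≤
      C * (volume S).toReal * h ^ r * ∫ u, K u * |u| ^ r := by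
  have hpointwise : ∀ y ∈ S, ‖|(∫ x, (1 / h) * K ((y - x) / h) * g x) - g y|‖ ≤
      C * h ^ r * ∫ u, K u * |u| ^ r := fun y _ => by
    rw [Real.norm_eq_abs, abs_abs, integral_rescaled_kernel_mul_eq K g hh]
    exact abs_integral_kernel_mul_shift_sub_le hKnonneg hKint hKone hKr hg_meas hHolder hh.le y
  calc ∫ y in S, |(∫ x, (1 / h) * K ((y - x) / h) * g x) - g y|
      ≤ ‖∫ y in S, |(∫ x, (1 / h) * K ((y - x) / h) * g x) - g y|‖ := Real.le_norm_self _
    _ ≤ (C * h ^ r * ∫ u, K u * |u| ^ r) * volume.real S :=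
        norm_setIntegral_le_of_norm_le_const hSfin.lt_top hpointwise
    _ = C * (volume S).toReal * h ^ r * ∫ u, K u * |u| ^ r := by rw [Measure.real]; ring

theorem kde_bias_bound (K g : ℝ → ℝ) (r C : ℝ) (hr0 : 0 < r) (hr1 : r ≤ 1)
    (hC : 0 < C)
    (hKmeas : Measurable K) (hKnonneg : ∀ u, 0 ≤ K u)
    (hKint : Integrable K) (hKone : ∫ u, K u = 1)
    (hKr : Integrable (fun u => K u * |u| ^ r))
    (hg_meas : Measurable g) (hg_nonneg : ∀ x, 0 ≤ g x)
    (hg_int : Integrable g) (hg_one : ∫ x, g x = 1)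
    (hHolder : ∀ x y : ℝ, |g x - g y| ≤ C * |x - y| ^ r)
    (h : ℝ) (hh : 0 < h) (S : Set ℝ) (hS : MeasurableSet S)
    (hSfin : volume S ≠ ⊤) :
    ∫ y in S, |(∫ x, (1 / h) * K ((y - x) / h) * g x) - g y| ≤
      C * (volume S).toReal * h ^ r * ∫ u, K u * |u| ^ r :=
  kde_bias_bound_general K g r C hKnonneg hKint hKone hKr hg_meas hHolder h hh S hSfin
end
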